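/- arXiv:2306.16407 — 8 statements merged into one kernel-verified Lean document; each statement's English description precedes it below -/
import Mathlib

section
/- Let F be a field, let D = (c_1,…,c_n) be a Ferrers diagram of order n, let 1 ≤ d ≤ n, and let C be an F-linear subspace of F^D such that every nonzero matrix in C has rank at least d. Then dim_F C ≤ ν_min(D,d). -/
/-- A Ferrers diagram of order `n`, given by its column heights
`c 0 ≤ c 1 ≤ … ≤ c (n-1) ≤ n` (so `c j` is the number of dots in the (j+1)-st column). -/
def IsFerrersDiagram (n : ℕ) (c : Fin n → ℕ) : Prop :=
  Monotone c ∧ ∀ i, c i ≤ n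

/-- Extension of the column-height function to `ℕ`, by zero. -/
def colExt (n : ℕ) (c : Fin n → ℕ) : ℕ → ℕ :=
  fun k => if h : k < n then c ⟨k, h⟩ else 0

/-- `ν_j(D,d) = Σ_{i=1}^{n-j} max{0, c_i - d + 1 + j}` (truncated subtraction gives the max). -/
def nuJ (n d j : ℕ) (c : Fin n → ℕ) : ℕ :=
  ∑ i ∈ Finset.range (n - j), (colExt n c i + 1 + j - d)

/-- `ν_min(D,d) = min{ν_j(D,d) : 0 ≤ j ≤ d-1}`. -/
noncomputable def nuMin (n d : ℕ) (c : Fin n → ℕ) : ℕ :=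
  sInf {k | ∃ j < d, k = nuJ n d j c}

/-- A Ferrers diagram is monotone if `c (i+1) > c i` whenever `0 < c i < n`. -/
def DiagMonotone (n : ℕ) (c : Fin n → ℕ) : Prop :=
  ∀ i : Fin n, ∀ hi : (i : ℕ) + 1 < n, 0 < c i → c i < n → c i < c ⟨(i : ℕ) + 1, hi⟩

/-- A Ferrers diagram is convex if `c (i+1) - c i ≤ 1` for all `i`. -/
def DiagConvex (n : ℕ) (c : Fin n → ℕ) : Prop :=
  ∀ i : Fin n, ∀ hi : (i : ℕ) + 1 < n, c ⟨(i : ℕ) + 1, hi⟩ ≤ c i + 1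

/-- A Ferrers diagram is strictly monotone if `c (i+1) > c i` whenever `c i > 0`. -/
def DiagStrictlyMonotone (n : ℕ) (c : Fin n → ℕ) : Prop :=
  ∀ i : Fin n, ∀ hi : (i : ℕ) + 1 < n, 0 < c i → c i < c ⟨(i : ℕ) + 1, hi⟩

/-- A Ferrers diagram is initially convex if `c 1 ≤ 1` and `c (i+1) - c i ≤ 1` for all `i`. -/
def DiagInitiallyConvex (n : ℕ) (c : Fin n → ℕ) : Prop :=
  (∀ h : 0 < n, c ⟨0, h⟩ ≤ 1) ∧ DiagConvex n c

/-- `h` is an admissible `p`-height for the Ferrers diagram `c`: `p^h ∣ n`, `p^h ∣ c i` for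
all `i`, and `c (n-r) = c (n-s)` (1-indexed) whenever `r, s` lie in the same block
`{Q p^h, …, (Q+1) p^h - 1}`. -/
def HeightOK (p n h : ℕ) (c : Fin n → ℕ) : Prop :=
  p ^ h ∣ n ∧ (∀ i, p ^ h ∣ c i) ∧
    ∀ r s : Fin n, (r : ℕ) / p ^ h = (s : ℕ) / p ^ h →
      c ⟨n - 1 - (r : ℕ), by have := r.isLt; omega⟩ =
        c ⟨n - 1 - (s : ℕ), by have := s.isLt; omega⟩

/-- The `p`-height of a Ferrers diagram: the largest admissible `h`. -/
noncomputable def pHeight (p n : ℕ) (c : Fin n → ℕ) : ℕ :=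
  sSup {h | HeightOK p n h c}

/-- The `p`-contraction of a Ferrers diagram: `c'_i = c_{p^h i} / p^h` (1-indexed),
a diagram of order `n / p^h`, where `h` is the `p`-height. -/
noncomputable def pContraction (p n : ℕ) (c : Fin n → ℕ) :
    Fin (n / p ^ pHeight p n c) → ℕ :=
  fun i => colExt n c (p ^ pHeight p n c * ((i : ℕ) + 1) - 1) / p ^ pHeight p n c

/-- A Ferrers diagram is `p`-monotone if its `p`-contraction is monotone. -/
def IsPMonotone (p n : ℕ) (c : Fin n → ℕ) : Prop :=
  DiagMonotone (n / p ^ pHeight p n c) (pContraction p n c)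

/-- A Ferrers diagram is `p`-convex if its `p`-contraction is convex. -/
def IsPConvex (p n : ℕ) (c : Fin n → ℕ) : Prop :=
  DiagConvex (n / p ^ pHeight p n c) (pContraction p n c)

/-- A Ferrers diagram is strictly `p`-monotone if its `p`-contraction is strictly monotone. -/
def IsStrictlyPMonotone (p n : ℕ) (c : Fin n → ℕ) : Prop :=
  DiagStrictlyMonotone (n / p ^ pHeight p n c) (pContraction p n c)

/-- A Ferrers diagram is initially `p`-convex if its `p`-contraction is initially convex. -/
def IsInitiallyPConvex (p n : ℕ) (c : Fin n → ℕ) : Prop :=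
  DiagInitiallyConvex (n / p ^ pHeight p n c) (pContraction p n c)

/-- The adjoint Ferrers diagram: column `j+1` of `D^⊤` has `#{i : c i ≥ n - j}` dots. -/
def adjointDiag (n : ℕ) (c : Fin n → ℕ) : Fin n → ℕ :=
  fun j => (Finset.univ.filter (fun i : Fin n => n - (j : ℕ) ≤ c i)).card

/-- `|D ∩ Δ_{i+1}^n|`: the number of dots of `D` on the (i+1)-st diagonal (0-indexed `i`). -/
def diagDots (n : ℕ) (c : Fin n → ℕ) (i : ℕ) : ℕ :=
  ((Finset.range n).filter (fun r => r + i < n ∧ r < colExt n c (r + i))).card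

/-- The pair `(D, d)` is MDS-constructible if
`ν_min(D,d) = Σ_{i=1}^n max{0, |D ∩ Δ_i^n| - d + 1}`. -/
def IsMDSConstructibleP (n d : ℕ) (c : Fin n → ℕ) : Prop :=
  nuMin n d c = ∑ i ∈ Finset.range n, (diagDots n c i + 1 - d)


open Finset

lemma card_cond_lt (n r : ℕ) (hr : r ≤ n) :
    Fintype.card {i : Fin n // (i : ℕ) < r} = r := by
  rw [Fintype.card_subtype, Finset.card_filter,
    Fin.sum_univ_eq_sum_range (fun k => if k < r then 1 else 0), ← Finset.card_filter]
  have : (Finset.range n).filter (fun k => k < r) = Finset.range r := by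
    ext k; simp only [Finset.mem_filter, Finset.mem_range]; omega
  rw [this, Finset.card_range]

lemma card_cond_ge (n m : ℕ) (hm : m ≤ n) :
    Fintype.card {i : Fin n // m ≤ (i : ℕ)} = n - m := by
  rw [Fintype.card_subtype, Finset.card_filter,
    Fin.sum_univ_eq_sum_range (fun k => if m ≤ k then 1 else 0), ← Finset.card_filter]
  have : (Finset.range n).filter (fun k => m ≤ k) = Finset.Ico m n := by
    ext k; simp only [Finset.mem_filter, Finset.mem_range, Finset.mem_Ico]; omega
  rw [this, Nat.card_Ico]

lemma matrix_rank_add_le {F : Type*} [Field F] {n : ℕ}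
    (A B : Matrix (Fin n) (Fin n) F) : (A + B).rank ≤ A.rank + B.rank := by
  have h : LinearMap.range (A + B).mulVecLin ≤
      LinearMap.range A.mulVecLin ⊔ LinearMap.range B.mulVecLin := by
    rintro x ⟨v, rfl⟩
    rw [Matrix.mulVecLin_add]
    exact Submodule.add_mem_sup ⟨v, rfl⟩ ⟨v, rfl⟩
  calc (A + B).rank ≤ Module.finrank F
        ↥(LinearMap.range A.mulVecLin ⊔ LinearMap.range B.mulVecLin) :=
        Submodule.finrank_mono h
    _ ≤ A.rank + B.rank := Submodule.finrank_add_le_finrank_add_finrank _ _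

lemma rank_le_of_support {F : Type*} [Field F] {n : ℕ} (A : Matrix (Fin n) (Fin n) F)
    (r m : ℕ) (hr : r ≤ n) (hm : m ≤ n)
    (h : ∀ i k : Fin n, r ≤ (i : ℕ) → (k : ℕ) < m → A i k = 0) :
    A.rank ≤ r + (n - m) := by
  classical
  set w : Fin n → F := fun i => if (i : ℕ) < r then 1 else 0 with hw
  set v : Fin n → F := fun k => if m ≤ (k : ℕ) then 1 else 0 with hv
  set B := Matrix.diagonal w * A with hB
  set G := A - B with hG
  have hA : A = B + G := by rw [hG]; abel
  have hGik : ∀ i k : Fin n, (k : ℕ) < m → G i k = 0 := by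
    intro i k hk
    simp only [hG, hB, Matrix.sub_apply, Matrix.diagonal_mul]
    by_cases hi : (i : ℕ) < r
    · simp [hw, hi]
    · rw [h i k (le_of_not_gt hi) hk]; simp
  have hGv : G = G * Matrix.diagonal v := by
    ext i k
    rw [Matrix.mul_diagonal]
    by_cases hk : m ≤ (k : ℕ)
    · simp [hv, hk]
    · rw [hGik i k (lt_of_not_ge hk)]; simp [hv, hk]
  have h1 : B.rank ≤ r := by
    calc B.rank ≤ (Matrix.diagonal w).rank := Matrix.rank_mul_le_left _ _
      _ = Fintype.card {i : Fin n // w i ≠ 0} := Matrix.rank_diagonal w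
      _ = Fintype.card {i : Fin n // (i : ℕ) < r} := by
          apply Fintype.card_congr
          apply Equiv.subtypeEquivRight
          intro i
          by_cases hi : (i : ℕ) < r <;> simp [hw, hi]
      _ = r := card_cond_lt n r hr
  have h2 : G.rank ≤ n - m := by
    calc G.rank = (G * Matrix.diagonal v).rank := by rw [← hGv]
      _ ≤ (Matrix.diagonal v).rank := Matrix.rank_mul_le_right _ _
      _ = Fintype.card {k : Fin n // v k ≠ 0} := Matrix.rank_diagonal v
      _ = Fintype.card {k : Fin n // m ≤ (k : ℕ)} := by
          apply Fintype.card_congr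
          apply Equiv.subtypeEquivRight
          intro k
          by_cases hk : m ≤ (k : ℕ) <;> simp [hv, hk]
      _ = n - m := card_cond_ge n m hm
  calc A.rank = (B + G).rank := by rw [← hA]
    _ ≤ B.rank + G.rank := matrix_rank_add_le B G
    _ ≤ r + (n - m) := add_le_add h1 h2

/-- Etzion–Silberstein bound: if `C` is an `F`-linear subspace of `F^D`
in which every nonzero matrix has rank at least `d`, then `dim_F C ≤ ν_min(D,d)`. -/
theorem statement0 {n d : ℕ} (hn : 1 ≤ n) (hd1 : 1 ≤ d) (hdn : d ≤ n)
    (c : Fin n → ℕ) (hferr : IsFerrersDiagram n c)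
    {F : Type*} [Field F]
    (C : Submodule F (Matrix (Fin n) (Fin n) F))
    (hsupp : ∀ A ∈ C, ∀ i j : Fin n, c j ≤ (i : ℕ) → A i j = 0)
    (hrank : ∀ A ∈ C, A ≠ 0 → d ≤ A.rank) :
    Module.finrank F C ≤ nuMin n d c := by
  
  classical
  obtain ⟨j₀, hj₀, heq⟩ : ∃ j < d, nuMin n d c = nuJ n d j c := by
    have hne : {k | ∃ j < d, k = nuJ n d j c}.Nonempty := ⟨nuJ n d 0 c, 0, hd1, rfl⟩
    exact Nat.sInf_mem hne
  rw [heq]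
  set r := d - 1 - j₀ with hr
  set S : Finset (Fin n × Fin n) :=
    Finset.univ.filter
      (fun p => r ≤ (p.1 : ℕ) ∧ (p.1 : ℕ) < c p.2 ∧ (p.2 : ℕ) < n - j₀) with hS
  let φ : C →ₗ[F] ({p : Fin n × Fin n // p ∈ S} → F) :=
    { toFun := fun a p => (a : Matrix (Fin n) (Fin n) F) p.1.1 p.1.2
      map_add' := fun a b => rfl
      map_smul' := fun t a => rfl }
  have hinj : Function.Injective φ := by
    rw [← LinearMap.ker_eq_bot, Submodule.eq_bot_iff]
    intro a ha
    have hφ : φ a = 0 := LinearMap.mem_ker.mp ha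
    have hzero : ∀ p : {p : Fin n × Fin n // p ∈ S},
        (a : Matrix (Fin n) (Fin n) F) p.1.1 p.1.2 = 0 := fun p => congrFun hφ p
    have hA0 : (a : Matrix (Fin n) (Fin n) F) = 0 := by
      by_contra hA
      have hd' := hrank a a.2 hA
      have hsup : ∀ i k : Fin n, r ≤ (i : ℕ) → (k : ℕ) < n - j₀ →
          (a : Matrix (Fin n) (Fin n) F) i k = 0 := by
        intro i k hi hk
        by_cases hik : (i : ℕ) < c k
        · exact hzero ⟨(i, k), Finset.mem_filter.mpr ⟨Finset.mem_univ _, hi, hik, hk⟩⟩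
        · exact hsupp a a.2 i k (le_of_not_gt hik)
      have hb := rank_le_of_support (a : Matrix (Fin n) (Fin n) F) r (n - j₀)
        (by omega) (by omega) hsup
      omega
    exact Subtype.ext hA0
  have hle : Module.finrank F C ≤
      Module.finrank F ({p : Fin n × Fin n // p ∈ S} → F) :=
    LinearMap.finrank_le_finrank_of_injective hinj
  have hcardS : S.card = nuJ n d j₀ c := by
    have key : ∀ k : Fin n,
        (∑ i : Fin n, if r ≤ (i : ℕ) ∧ (i : ℕ) < c k ∧ (k : ℕ) < n - j₀ then 1 else 0)
          = if (k : ℕ) < n - j₀ then c k + 1 + j₀ - d else 0 := by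
      intro k
      by_cases hk : (k : ℕ) < n - j₀
      · simp only [hk, and_true, if_pos]
        rw [Fin.sum_univ_eq_sum_range (fun i => if r ≤ i ∧ i < c k then 1 else 0),
          ← Finset.card_filter]
        have hck : c k ≤ n := hferr.2 k
        have : (Finset.range n).filter (fun i => r ≤ i ∧ i < c k) = Finset.Ico r (c k) := by
          ext i; simp only [Finset.mem_filter, Finset.mem_range, Finset.mem_Ico]; omega
        rw [this, Nat.card_Ico]
        omega
      · simp [hk]
    rw [hS, Finset.card_filter, Fintype.sum_prod_type, Finset.sum_comm]
    calc (∑ k : Fin n, ∑ i : Fin n,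
          if r ≤ (i : ℕ) ∧ (i : ℕ) < c k ∧ (k : ℕ) < n - j₀ then 1 else 0)
        = ∑ k : Fin n, if (k : ℕ) < n - j₀ then c k + 1 + j₀ - d else 0 :=
          Finset.sum_congr rfl (fun k _ => key k)
      _ = ∑ k : Fin n,
          (fun m => if m < n - j₀ then colExt n c m + 1 + j₀ - d else 0) (k : ℕ) := by
          apply Finset.sum_congr rfl
          intro k _
          simp only [colExt, k.isLt, dif_pos, Fin.eta]
      _ = ∑ m ∈ Finset.range n,
          (if m < n - j₀ then colExt n c m + 1 + j₀ - d else 0) :=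
by
          exact Fin.sum_univ_eq_sum_range
            (fun m => if m < n - j₀ then colExt n c m + 1 + j₀ - d else 0) n
      _ = ∑ m ∈ Finset.range (n - j₀), (colExt n c m + 1 + j₀ - d) := by
          rw [← Finset.sum_subset (Finset.range_subset_range.mpr (Nat.sub_le n j₀))
            (fun x _ hx => by rw [if_neg (by simpa using hx)])]
          exact Finset.sum_congr rfl (fun m hm => if_pos (Finset.mem_range.mp hm))
      _ = nuJ n d j₀ c := rfl
  refine hle.trans ?_
  rw [Module.finrank_pi, Fintype.card_coe, hcardS]
end

section
/- The family of F-linear endomorphisms (σ̄^0, σ̄^1, …, σ̄^{n−1}) of L is an L-basis of End_F(L), where End_F(L) is regarded as an L-module via (a·f)(x) = a·f(x) for a ∈ L. -/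
/-- `σ̄ = σ - id`, as an `F`-linear endomorphism of `L`. -/
def sbar {F L : Type*} [Field F] [Field L] [Algebra F L] (σ : L ≃ₐ[F] L) :
    L →ₗ[F] L :=
  σ.toLinearMap - LinearMap.id

theorem Submodule.span_range_add_one_pow_le {R A : Type*} [Semiring R] [Semiring A] [Module R A]
    (a : A) (n : ℕ) :
    span R (Set.range fun i : Fin n => (a + 1) ^ (i : ℕ)) ≤
      span R (Set.range fun i : Fin n => a ^ (i : ℕ)) := by
  rw [span_le]
  rintro _ ⟨i, rfl⟩
  dsimp only
  rw [(Commute.one_right a).add_pow]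
  refine sum_mem fun k hk => ?_
  have hki : k < n := (Finset.mem_range.mp hk).trans_le i.isLt
  rw [one_pow, mul_one, ← nsmul_eq_mul']
  exact nsmul_mem (subset_span (Set.mem_range_self (⟨k, hki⟩ : Fin n))) _

theorem AlgEquiv.linearIndependent_toLinearMap_pow {F L : Type*} [Field F] [Field L] [Algebra F L]
    (σ : L ≃ₐ[F] L) {n : ℕ} (hn : n ≤ orderOf σ) :
    LinearIndependent L fun i : Fin n => σ.toLinearMap ^ (i : ℕ) := by
  have hinj : Function.Injective fun i : Fin n => ((σ ^ (i : ℕ) : L ≃ₐ[F] L) : L →ₐ[F] L) :=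
    fun i j hij => Fin.ext <| pow_injOn_Iio_orderOf (i.isLt.trans_le hn) (j.isLt.trans_le hn)
      (AlgEquiv.coe_toAlgHom_injective hij)
  simpa only [Function.comp_def, AlgEquiv.toAlgHom_toLinearMap, AlgEquiv.pow_toLinearMap] using
    (linearIndependent_toLinearMap F L L).comp _ hinj

theorem card_fin_eq_finrank_linearMap_self {F L : Type*} [Field F] [Field L] [Algebra F L]
    [FiniteDimensional F L] {n : ℕ} (hn : Module.finrank F L = n) :
    Fintype.card (Fin n) = Module.finrank L (L →ₗ[F] L) := by
  rw [Fintype.card_fin, Module.finrank_linearMap_self, hn]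

theorem span_range_sbar_pow_eq_top {F L : Type*} [Field F] [Field L] [Algebra F L] [IsGalois F L]
    [FiniteDimensional F L] {n : ℕ} (hn : Module.finrank F L = n) (σ : L ≃ₐ[F] L)
    (hσ : ∀ τ : L ≃ₐ[F] L, τ ∈ Subgroup.zpowers σ) :
    Submodule.span L (Set.range fun i : Fin n => sbar σ ^ (i : ℕ)) = ⊤ := by
  have hord : orderOf σ = n := by
    rw [orderOf_eq_card_of_forall_mem_zpowers hσ, IsGalois.card_aut_eq_finrank, hn]
  have hσ_eq : σ.toLinearMap = sbar σ + 1 := by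
    rw [sbar, ← Module.End.one_eq_id, sub_add_cancel]
  rw [eq_top_iff, ← (σ.linearIndependent_toLinearMap_pow hord.ge).span_eq_top_of_card_eq_finrank'
    (card_fin_eq_finrank_linearMap_self hn), hσ_eq]
  exact Submodule.span_range_add_one_pow_le _ _

theorem statement1_general {p m : ℕ}
    {F L : Type*} [Field F] [Field L] [Algebra F L] [IsGalois F L] [FiniteDimensional F L]
    (hn : Module.finrank F L = p ^ m)
    (σ : L ≃ₐ[F] L) (hσ : ∀ τ : L ≃ₐ[F] L, τ ∈ Subgroup.zpowers σ) :
    LinearIndependent L (fun i : Fin (p ^ m) => (sbar σ ^ (i : ℕ) : L →ₗ[F] L)) ∧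
      Submodule.span L
        (Set.range (fun i : Fin (p ^ m) => (sbar σ ^ (i : ℕ) : L →ₗ[F] L))) = ⊤ := by
  have hspan := span_range_sbar_pow_eq_top hn σ hσ
  exact ⟨linearIndependent_of_top_le_span_of_card_eq_finrank hspan.ge
    (card_fin_eq_finrank_linearMap_self hn), hspan⟩

/-- `(σ̄^0, σ̄^1, …, σ̄^{n-1})` is an `L`-basis of `End_F(L)`,
where `End_F(L) = L →ₗ[F] L` carries the `L`-module structure `(a • f) x = a • f x`. -/
theorem statement1 {p m : ℕ} (hp : p.Prime) (hm : 1 ≤ m)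
    {F L : Type*} [Field F] [Field L] [Algebra F L] [IsGalois F L] [FiniteDimensional F L]
    [CharP F p] (hn : Module.finrank F L = p ^ m)
    (σ : L ≃ₐ[F] L) (hσ : ∀ τ : L ≃ₐ[F] L, τ ∈ Subgroup.zpowers σ) :
    LinearIndependent L (fun i : Fin (p ^ m) => (sbar σ ^ (i : ℕ) : L →ₗ[F] L)) ∧
      Submodule.span L
        (Set.range (fun i : Fin (p ^ m) => (sbar σ ^ (i : ℕ) : L →ₗ[F] L))) = ⊤ :=
  statement1_general hn σ hσ
end

section
/- For every i ∈ {0,…,n}, the F-subspace F_i = ker(σ̄^i) of L has dimension i over F. -/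
open Module LinearMap

theorem LinearMap.finrank_ker_comp_le {K V V₂ V₃ : Type*} [Field K] [AddCommGroup V]
    [Module K V] [AddCommGroup V₂] [Module K V₂] [AddCommGroup V₃] [Module K V₃]
    [FiniteDimensional K V] [FiniteDimensional K V₂] (f : V₂ →ₗ[K] V₃) (g : V →ₗ[K] V₂) :
    finrank K (ker (f ∘ₗ g)) ≤ finrank K (ker f) + finrank K (ker g) := by
  set r := g.domRestrict (ker (f ∘ₗ g))
  have hrange : finrank K (range r) ≤ finrank K (ker f) :=
    Submodule.finrank_mono (by rintro _ ⟨x, rfl⟩; exact x.2)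
  have hker : finrank K (ker r) ≤ finrank K (ker g) := by
    rw [← Submodule.finrank_map_subtype_eq]
    apply Submodule.finrank_mono
    rintro _ ⟨x, hx, rfl⟩
    exact hx
  have := r.finrank_range_add_finrank_ker
  omega

namespace Module.End

variable {K V : Type*} [Field K] [AddCommGroup V] [Module K V] [FiniteDimensional K V]

theorem finrank_ker_pow_add_le (f : End K V) (j t : ℕ) :
    finrank K (ker (f ^ (j + t))) ≤ finrank K (ker (f ^ j)) + t * finrank K (ker f) := by
  induction t with
  | zero => simp
  | succ t ih =>
    have hcomp := finrank_ker_comp_le (f ^ (j + t)) f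
    rw [← mul_eq_comp, ← pow_succ] at hcomp
    rw [add_mul, one_mul, ← add_assoc]
    omega

theorem finrank_ker_pow_eq_of_finrank_ker_le_one (f : End K V) (hf : f ^ finrank K V = 0)
    (hker : finrank K (ker f) ≤ 1) {i : ℕ} (hi : i ≤ finrank K V) :
    finrank K (ker (f ^ i)) = i := by
  have hupper := finrank_ker_pow_add_le f 0 i
  have hlower := finrank_ker_pow_add_le f i (finrank K V - i)
  rw [Nat.add_sub_cancel' hi, hf, ker_zero, finrank_top] at hlower
  rw [pow_zero, one_eq_id, ker_id, finrank_bot, zero_add] at hupper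
  have := Nat.mul_le_mul_left i hker
  have := Nat.mul_le_mul_left (finrank K V - i) hker
  omega

end Module.End

section Galois

variable {F L : Type*} [Field F] [Field L] [Algebra F L]

theorem mem_ker_sbar_iff (σ : L ≃ₐ[F] L) (x : L) : x ∈ ker (sbar σ) ↔ σ x = x := by
  simp [sbar, sub_eq_zero]

theorem sbar_pow_eq_zero (p : ℕ) [ExpChar F p] {σ : L ≃ₐ[F] L} {k : ℕ} (hσ : σ ^ p ^ k = 1) :
    sbar σ ^ p ^ k = 0 := by
  have := expChar_of_injective_algebraMap (algebraMap F (End F L)).injective p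
  rw [sbar, ← End.one_eq_id, sub_pow_expChar_pow_of_commute p k (Commute.one_right _), one_pow,
    ← AlgEquiv.pow_toLinearMap, hσ, AlgEquiv.one_toLinearMap, End.one_eq_id, sub_self]

theorem ker_sbar_eq_toSubmodule_bot [IsGalois F L] [FiniteDimensional F L] {σ : L ≃ₐ[F] L}
    (hσ : ∀ τ : L ≃ₐ[F] L, τ ∈ Subgroup.zpowers σ) :
    ker (sbar σ) = Subalgebra.toSubmodule ⊥ := by
  ext x
  rw [mem_ker_sbar_iff, Subalgebra.mem_toSubmodule, Algebra.mem_bot,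
    IsGalois.mem_range_algebraMap_iff_fixed]
  refine ⟨fun hx τ => ?_, fun hx => hx σ⟩
  obtain ⟨k, rfl⟩ := Subgroup.mem_zpowers_iff.mp (hσ τ)
  exact MulAction.mem_fixedBy_zpow (G := L ≃ₐ[F] L) hx k

end Galois

theorem statement2_general {p m : ℕ} (hp : p.Prime)
    {F L : Type*} [Field F] [Field L] [Algebra F L] [IsGalois F L] [FiniteDimensional F L]
    [CharP F p] (hn : Module.finrank F L = p ^ m)
    (σ : L ≃ₐ[F] L) (hσ : ∀ τ : L ≃ₐ[F] L, τ ∈ Subgroup.zpowers σ)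
    (i : ℕ) (hi : i ≤ p ^ m) :
    Module.finrank F (LinearMap.ker (sbar σ ^ i)) = i := by
  have : Fact p.Prime := ⟨hp⟩
  have hσn : σ ^ p ^ m = 1 := by
    rw [← hn, ← IsGalois.card_aut_eq_finrank]
    exact pow_card_eq_one'
  refine End.finrank_ker_pow_eq_of_finrank_ker_le_one _ ?_ ?_ (hn ▸ hi)
  · rw [hn]
    exact sbar_pow_eq_zero p hσn
  · rw [ker_sbar_eq_toSubmodule_bot hσ, Subalgebra.finrank_toSubmodule, Subalgebra.finrank_bot]

/-- for every `i ∈ {0,…,n}`, the subspace `F_i = ker(σ̄^i)` of `L`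
has `F`-dimension `i`. -/
theorem statement2 {p m : ℕ} (hp : p.Prime) (hm : 1 ≤ m)
    {F L : Type*} [Field F] [Field L] [Algebra F L] [IsGalois F L] [FiniteDimensional F L]
    [CharP F p] (hn : Module.finrank F L = p ^ m)
    (σ : L ≃ₐ[F] L) (hσ : ∀ τ : L ≃ₐ[F] L, τ ∈ Subgroup.zpowers σ)
    (i : ℕ) (hi : i ≤ p ^ m) :
    Module.finrank F (LinearMap.ker (sbar σ ^ i)) = i :=
  statement2_general hp hn σ hσ i hi
end

section
/- Let a, b, h ≥ 0 be integers satisfying p^h(a+b) ≤ n. Then F_{p^h·a} · F_{p^h·b} ⊆ F_{p^h(a+b−1)}; that is, for every x ∈ F_{p^h·a} and y ∈ F_{p^h·b}, the product xy lies in F_{p^h(a+b−1)}. -/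
section Aux
variable {F L : Type*} [Field F] [Field L] [Algebra F L]

lemma sbar_apply (τ : L ≃ₐ[F] L) (z : L) : sbar τ z = τ z - z := rfl

lemma sbar_pow_comm (τ : L ≃ₐ[F] L) (a : ℕ) (z : L) :
    (sbar τ ^ a) (τ z) = τ ((sbar τ ^ a) z) := by
  induction a with
  | zero => simp
  | succ a ih =>
      rw [pow_succ', Module.End.mul_apply, Module.End.mul_apply, ih]
      simp [sbar_apply, map_sub]

lemma sbar_key (τ : L ≃ₐ[F] L) (a b : ℕ) (x y : L)
    (hx : (sbar τ ^ a) x = 0) (hy : (sbar τ ^ b) y = 0) :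
    (sbar τ ^ (a + b - 1)) (x * y) = 0 := by
  suffices H : ∀ n a b (x y : L), a + b ≤ n → (sbar τ ^ a) x = 0 → (sbar τ ^ b) y = 0 →
      (sbar τ ^ (a + b - 1)) (x * y) = 0 from H (a + b) a b x y le_rfl hx hy
  clear hx hy x y a b
  intro n
  induction n with
  | zero =>
      intro a b x y hab hx hy
      have ha : a = 0 := by omega
      subst ha
      simp only [pow_zero, Module.End.one_apply] at hx
      subst hx
      simp
  | succ n ih =>
      intro a b x y hab hx hy
      match a, b with
      | 0, b =>
          simp only [pow_zero, Module.End.one_apply] at hx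
          subst hx
          simp
      | a + 1, 0 =>
          simp only [pow_zero, Module.End.one_apply] at hy
          subst hy
          simp
      | a + 1, b + 1 =>
          have e : a + 1 + (b + 1) - 1 = (a + b) + 1 := by omega
          rw [e, pow_succ, Module.End.mul_apply]
          have hmul : sbar τ (x * y) = τ x * sbar τ y + sbar τ x * y := by
            simp only [sbar_apply, map_mul]; ring
          rw [hmul, map_add]
          have h1 : (sbar τ ^ (a + b)) (τ x * sbar τ y) = 0 := by
            have e1 : (a + 1) + b - 1 = a + b := by omega
            have hx' : (sbar τ ^ (a + 1)) (τ x) = 0 := by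
              rw [sbar_pow_comm, hx, map_zero]
            have hy' : (sbar τ ^ b) (sbar τ y) = 0 := by
              rw [← Module.End.mul_apply, ← pow_succ]; exact hy
            have := ih (a + 1) b (τ x) (sbar τ y) (by omega) hx' hy'
            rwa [e1] at this
          have h2 : (sbar τ ^ (a + b)) (sbar τ x * y) = 0 := by
            have e2 : a + (b + 1) - 1 = a + b := by omega
            have hx' : (sbar τ ^ a) (sbar τ x) = 0 := by
              rw [← Module.End.mul_apply, ← pow_succ]; exact hx
            have := ih a (b + 1) (sbar τ x) y (by omega) hx' hy
            rwa [e2] at this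
          rw [h1, h2, add_zero]

lemma toLinearMap_pow (σ : L ≃ₐ[F] L) (k : ℕ) :
    (σ ^ k).toLinearMap = σ.toLinearMap ^ k := by
  induction k with
  | zero => rfl
  | succ k ih =>
      ext z
      simp [pow_succ, Module.End.mul_apply, ← ih, AlgEquiv.mul_apply]

lemma sbar_pow_char {p : ℕ} (hp : p.Prime) [CharP F p] (σ : L ≃ₐ[F] L) (h : ℕ) :
    sbar σ ^ p ^ h = sbar (σ ^ p ^ h) := by
  haveI : Fact p.Prime := ⟨hp⟩
  haveI : CharP (Module.End F L) p :=
    charP_of_injective_algebraMap (algebraMap F (Module.End F L)).injective p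
  have hc : Commute (σ.toLinearMap : Module.End F L) 1 := Commute.one_right _
  have := sub_pow_char_pow_of_commute p h hc
  simpa [sbar, toLinearMap_pow, Module.End.one_eq_id] using this

end Aux

/-- if `p^h (a+b) ≤ n`, then `F_{p^h a} · F_{p^h b} ⊆ F_{p^h (a+b-1)}`. -/
theorem statement4 {p m : ℕ} (hp : p.Prime) (hm : 1 ≤ m)
    {F L : Type*} [Field F] [Field L] [Algebra F L] [IsGalois F L] [FiniteDimensional F L]
    [CharP F p] (hn : Module.finrank F L = p ^ m)
    (σ : L ≃ₐ[F] L) (hσ : ∀ τ : L ≃ₐ[F] L, τ ∈ Subgroup.zpowers σ)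
    (a b h : ℕ) (hab : p ^ h * (a + b) ≤ p ^ m)
    (x y : L) (hx : x ∈ LinearMap.ker (sbar σ ^ (p ^ h * a)))
    (hy : y ∈ LinearMap.ker (sbar σ ^ (p ^ h * b))) :
    x * y ∈ LinearMap.ker (sbar σ ^ (p ^ h * (a + b - 1))) := by
  rw [LinearMap.mem_ker] at hx hy ⊢
  set τ : L ≃ₐ[F] L := σ ^ p ^ h with hτ
  have hpow : ∀ k : ℕ, sbar σ ^ (p ^ h * k) = sbar τ ^ k := fun k => by
    rw [pow_mul, sbar_pow_char hp]
  rw [hpow] at hx hy ⊢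
  exact sbar_key τ a b x y hx hy
end

section
/- Let p be a prime and let D be a Ferrers diagram of order n. Then: (1) D and its adjoint D^⊤ have the same p-height; (2) (D^⊤)^(p) = (D^(p))^⊤; and (3) D is p-monotone if and only if D^⊤ is p-convex. -/
open Finset

variable {n : ℕ}

lemma sub_le_iff_le_of_dvd {P a v r : ℕ} (ha : P ∣ a) (hv : P ∣ v) (hr : r < P) :
    a - r ≤ v ↔ a ≤ v := by
  obtain ⟨A, rfl⟩ := ha
  obtain ⟨V, rfl⟩ := hv
  refine ⟨fun h => ?_, fun h => (Nat.sub_le _ _).trans h⟩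
  by_contra! hlt
  have : P * (V + 1) ≤ P * A := Nat.mul_le_mul_left P (Nat.lt_of_mul_lt_mul_left hlt)
  rw [mul_add_one] at this
  omega

lemma mul_succ_sub_one_div {P : ℕ} (hP : 0 < P) (q : ℕ) : (P * (q + 1) - 1) / P = q := by
  rw [mul_add_one, Nat.add_sub_assoc hP, Nat.mul_add_div hP, Nat.div_eq_of_lt (by omega),
    add_zero]

lemma mul_succ_sub_one_lt {P q : ℕ} (hP : 0 < P) (hPn : P ∣ n) (hq : q < n / P) :
    P * (q + 1) - 1 < n := by
  have h1 : P * (q + 1) ≤ P * (n / P) := Nat.mul_le_mul_left P hq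
  have h2 : 0 < P * (q + 1) := Nat.mul_pos hP q.succ_pos
  rw [Nat.mul_div_cancel' hPn] at h1
  omega

lemma val_rev_div {P : ℕ} (hP : 0 < P) (hPn : P ∣ n) (i : Fin n) :
    (i.rev : ℕ) / P = n / P - 1 - i / P := by
  obtain ⟨N, rfl⟩ := hPn
  have hq : (i : ℕ) / P < N := Nat.div_lt_of_lt_mul i.isLt
  have hsplit := Nat.div_add_mod i P
  have hlast : P * ((i : ℕ) / P + 1) ≤ P * N := Nat.mul_le_mul_left P hq
  have hr := Nat.mod_lt i hP
  rw [mul_add_one] at hlast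
  have : (i.rev : ℕ) = P * (N - 1 - i / P) + (P - 1 - i % P) := by
    rw [Fin.val_rev, Nat.mul_sub P (N - 1), Nat.mul_sub P N 1, mul_one]
    omega
  rw [this, Nat.mul_add_div hP, Nat.div_eq_of_lt (show P - 1 - i % P < P by omega),
    Nat.mul_div_cancel_left _ hP, add_zero]

lemma val_rev_div_eq_iff {P : ℕ} (hP : 0 < P) (hPn : P ∣ n) {i j : Fin n} :
    (i.rev : ℕ) / P = j.rev / P ↔ (i : ℕ) / P = j / P := by
  rw [val_rev_div hP hPn, val_rev_div hP hPn]
  have := Nat.div_lt_div_of_lt_of_dvd hPn i.isLt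
  have := Nat.div_lt_div_of_lt_of_dvd hPn j.isLt
  omega

/-- The admissibility of the height `h` for `P = p ^ h` (`HeightOK`), with the blocks of columns
counted from the left instead of from the right: as `P ∣ n`, these are the same blocks. -/
structure IsBlockDiagram (P : ℕ) (c : Fin n → ℕ) : Prop where
  dvd_order : P ∣ n
  dvd_col : ∀ i, P ∣ c i
  col_eq : ∀ i j : Fin n, (i : ℕ) / P = j / P → c i = c j

lemma heightOK_iff {p h : ℕ} {c : Fin n → ℕ} (hP : 0 < p ^ h) :
    HeightOK p n h c ↔ IsBlockDiagram (p ^ h) c := by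
  have hrev (r : Fin n) (hr : n - 1 - (r : ℕ) < n) : (⟨n - 1 - r, hr⟩ : Fin n) = r.rev :=
    Fin.ext (by rw [Fin.val_rev]; dsimp only; omega)
  simp only [HeightOK, hrev]
  constructor
  · rintro ⟨hPn, hc, hc_rev⟩
    refine ⟨hPn, hc, fun i j hij => ?_⟩
    simpa using hc_rev i.rev j.rev ((val_rev_div_eq_iff hP hPn).2 hij)
  · rintro ⟨hPn, hc, hc_eq⟩
    exact ⟨hPn, hc, fun r s hrs => hc_eq _ _ ((val_rev_div_eq_iff hP hPn).2 hrs)⟩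

lemma heightOK_zero (p : ℕ) (c : Fin n → ℕ) : HeightOK p n 0 c :=
  ⟨one_dvd n, fun _ => one_dvd _, fun r s hrs => by
    rw [pow_zero, Nat.div_one, Nat.div_one] at hrs
    simp only [hrs]⟩

/-- If the admissible heights are unbounded (`p = 1` or `n = 0`), `sSup` takes the junk value
`0`, which is admissible too. -/
lemma heightOK_pHeight (p : ℕ) (c : Fin n → ℕ) : HeightOK p n (pHeight p n c) c := by
  by_cases hb : BddAbove {h | HeightOK p n h c}
  · exact Nat.sSup_mem ⟨0, heightOK_zero p c⟩ hb
  · rw [pHeight, Nat.sSup_of_not_bddAbove hb]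
    exact heightOK_zero p c

lemma sub_le_card_filter_iff {c : Fin n → ℕ} (hc : Monotone c) (t : ℕ) (k : Fin n) :
    n - k ≤ #{i | t ≤ c i} ↔ t ≤ c k := by
  have hcard : #{i | t ≤ c i} = #{i : Fin n | t ≤ c i.rev} := card_equiv Fin.revPerm (by simp)
  have := Tuple.lt_card_ge_iff_apply_ge_of_antitone (j := k.rev) (a := t)
    (hc.comp_antitone Fin.rev_anti)
  simp only [Function.comp_apply, Fin.rev_rev, Fin.val_rev, ← hcard] at this
  rw [← this]
  omega

lemma IsFerrersDiagram.adjointDiag_adjointDiag {c : Fin n → ℕ} (hc : IsFerrersDiagram n c) :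
    adjointDiag n (adjointDiag n c) = c := by
  funext k
  calc adjointDiag n (adjointDiag n c) k = #{j : Fin n | n - j ≤ c k} := by
        refine congrArg card (filter_congr fun j _ => ?_)
        exact sub_le_card_filter_iff hc.1 _ k
    _ = #{j : Fin n | j < c k} := card_equiv Fin.revPerm fun j => by
        simp only [mem_filter, mem_univ, true_and, Fin.revPerm_apply, Fin.val_rev]
        omega
    _ = c k := by rw [Fin.card_filter_val_lt, min_eq_right (hc.2 k)]

section Blocks

variable {P : ℕ}

def blockOf (hPn : P ∣ n) (i : Fin n) : Fin (n / P) :=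
  ⟨i / P, Nat.div_lt_div_of_lt_of_dvd hPn i.isLt⟩

lemma card_filter_blockOf (hP : 0 < P) (hPn : P ∣ n) (f : Fin (n / P) → Prop)
    [DecidablePred f] :
    #{i | f (blockOf hPn i)} = P * #{q | f q} := by
  let e : Fin (n / P) × Fin P ≃ Fin n :=
    finProdFinEquiv.trans (finCongr (Nat.div_mul_cancel hPn))
  have he (x : Fin (n / P) × Fin P) : blockOf hPn (e x) = x.1 := Fin.ext <| by
    simp [e, blockOf, Nat.add_mul_div_left _ _ hP, Nat.div_eq_of_lt x.2.isLt]
  calc #{i | f (blockOf hPn i)} = #(({q | f q} : Finset _) ×ˢ (univ : Finset (Fin P))) :=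
        (card_equiv e fun x => by simp [he]).symm
    _ = P * #{q | f q} := by rw [card_product, card_univ, Fintype.card_fin, mul_comm]

/-- `pContraction p n c` is `blockContraction n (p ^ pHeight p n c) c` by definition. -/
def blockContraction (n P : ℕ) (c : Fin n → ℕ) : Fin (n / P) → ℕ :=
  fun q => colExt n c (P * ((q : ℕ) + 1) - 1) / P

lemma blockContraction_apply (hP : 0 < P) (hPn : P ∣ n) (c : Fin n → ℕ) (q : Fin (n / P)) :
    blockContraction n P c q = c ⟨P * (q + 1) - 1, mul_succ_sub_one_lt hP hPn q.isLt⟩ / P :=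
  congrArg (· / P) (dif_pos _)

lemma monotone_blockContraction (hP : 0 < P) (hPn : P ∣ n) {c : Fin n → ℕ} (hc : Monotone c) :
    Monotone (blockContraction n P c) := fun q q' hqq' => by
  simp only [blockContraction_apply hP hPn]
  exact Nat.div_le_div_right (hc (Nat.sub_le_sub_right (Nat.mul_le_mul_left P
    (Nat.succ_le_succ hqq')) 1))

namespace IsBlockDiagram

variable {c : Fin n → ℕ}

lemma blockContraction_blockOf (hc : IsBlockDiagram P c) (hP : 0 < P) (i : Fin n) :
    blockContraction n P c (blockOf hc.dvd_order i) = c i / P := by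
  rw [blockContraction_apply hP hc.dvd_order]
  exact congrArg (· / P) (hc.col_eq _ _ (mul_succ_sub_one_div hP _))

lemma adjointDiag_eq (hc : IsBlockDiagram P c) (hP : 0 < P) (j : Fin n) :
    adjointDiag n c j =
      P * adjointDiag (n / P) (blockContraction n P c) (blockOf hc.dvd_order j) := by
  have hle (i : Fin n) :
      n - j ≤ c i ↔ n / P - j / P ≤ blockContraction n P c (blockOf hc.dvd_order i) := by
    rw [hc.blockContraction_blockOf hP, Nat.le_div_iff_mul_le hP, Nat.sub_mul,
      Nat.div_mul_cancel hc.dvd_order, ← sub_le_iff_le_of_dvd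
        (Nat.dvd_sub hc.dvd_order (Nat.dvd_mul_left P _)) (hc.dvd_col i) (Nat.mod_lt j hP),
      Nat.sub_sub, Nat.div_add_mod']
  simp only [adjointDiag, hle]
  exact card_filter_blockOf hP hc.dvd_order (fun q => n / P - j / P ≤ blockContraction n P c q)

lemma adjoint (hc : IsBlockDiagram P c) (hP : 0 < P) : IsBlockDiagram P (adjointDiag n c) where
  dvd_order := hc.dvd_order
  dvd_col j := by
    rw [hc.adjointDiag_eq hP]
    exact Nat.dvd_mul_right P _
  col_eq i j hij := by
    rw [hc.adjointDiag_eq hP, hc.adjointDiag_eq hP,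
      show blockOf _ i = blockOf _ j from Fin.ext hij]

lemma blockContraction_adjointDiag (hc : IsBlockDiagram P c) (hP : 0 < P) :
    blockContraction n P (adjointDiag n c) = adjointDiag (n / P) (blockContraction n P c) := by
  funext q
  rw [blockContraction_apply hP hc.dvd_order, hc.adjointDiag_eq hP, Nat.mul_div_cancel_left _ hP]
  congr
  exact Fin.ext (mul_succ_sub_one_div hP q)

end IsBlockDiagram

end Blocks

lemma heightOK_adjointDiag_iff {p h : ℕ} (hp : 0 < p) {c : Fin n → ℕ}
    (hc : IsFerrersDiagram n c) : HeightOK p n h (adjointDiag n c) ↔ HeightOK p n h c := by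
  have hP := pow_pos hp h
  rw [heightOK_iff hP, heightOK_iff hP]
  refine ⟨fun hadj => ?_, fun hc' => hc'.adjoint hP⟩
  simpa only [hc.adjointDiag_adjointDiag] using hadj.adjoint hP

lemma pHeight_adjointDiag {p : ℕ} (hp : 0 < p) {c : Fin n → ℕ} (hc : IsFerrersDiagram n c) :
    pHeight p n (adjointDiag n c) = pHeight p n c := by
  simp only [pHeight, heightOK_adjointDiag_iff hp hc]

lemma adjointDiag_succ {m : ℕ} (d : Fin m → ℕ) {j v : ℕ} (hj : j + 1 < m)
    (hv : v + j + 1 = m) :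
    adjointDiag m d ⟨j + 1, hj⟩ = adjointDiag m d ⟨j, by omega⟩ + #{i | d i = v} := by
  simp only [adjointDiag]
  rw [← card_union_of_disjoint (disjoint_filter.2 fun i _ h h' => by omega), ← filter_or]
  exact congrArg card (filter_congr fun i _ => by omega)

lemma diagConvex_adjointDiag_iff_card_fiber_le_one {m : ℕ} (d : Fin m → ℕ) :
    DiagConvex m (adjointDiag m d) ↔ ∀ v, 0 < v → v < m → #{i | d i = v} ≤ 1 := by
  refine ⟨fun H v hv hvm => ?_, fun H j hj => ?_⟩
  · have := H ⟨m - 1 - v, by omega⟩ (by dsimp only; omega)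
    rw [adjointDiag_succ d _ (show v + (m - 1 - v) + 1 = m by omega)] at this
    omega
  · rw [adjointDiag_succ d hj (show m - (j + 1) + j + 1 = m by omega), Fin.eta]
    have := H (m - (j + 1)) (by omega) (by omega)
    omega

lemma diagMonotone_iff_card_fiber_le_one {m : ℕ} {d : Fin m → ℕ} (hd : Monotone d) :
    DiagMonotone m d ↔ ∀ v, 0 < v → v < m → #{i | d i = v} ≤ 1 := by
  refine ⟨fun H v hv hvm => card_le_one.2 fun i hi j hj => ?_, fun H i hi h0 hlt => ?_⟩
  · simp only [mem_filter, mem_univ, true_and] at hi hj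
    have not_both (a b : Fin m) (hab : a < b) (ha : d a = v) (hb : d b = v) : False := by
      have hab' : (a : ℕ) < b := hab
      have := H a (by omega) (by omega) (by omega)
      have := hd (show (⟨a + 1, by omega⟩ : Fin m) ≤ b from hab)
      omega
    by_contra hne
    rcases lt_or_gt_of_ne hne with h | h
    exacts [not_both i j h hi hj, not_both j i h hj hi]
  · refine lt_of_le_of_ne (hd (Nat.le_succ _)) fun heq => ?_
    have := card_le_one.1 (H (d i) h0 hlt) i (by simp) ⟨i + 1, hi⟩ (by simp [heq])
    simp [Fin.ext_iff] at this

lemma diagMonotone_iff_diagConvex_adjointDiag {m : ℕ} {d : Fin m → ℕ} (hd : Monotone d) :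
    DiagMonotone m d ↔ DiagConvex m (adjointDiag m d) := by
  rw [diagMonotone_iff_card_fiber_le_one hd, diagConvex_adjointDiag_iff_card_fiber_le_one]

theorem statement9_general {p n : ℕ} (hp : p.Prime)
    (c : Fin n → ℕ) (hferr : IsFerrersDiagram n c) :
    pHeight p n (adjointDiag n c) = pHeight p n c ∧
    (∀ (k : ℕ) (h1 : k < n / p ^ pHeight p n (adjointDiag n c))
        (h2 : k < n / p ^ pHeight p n c),
      pContraction p n (adjointDiag n c) ⟨k, h1⟩ =
        adjointDiag (n / p ^ pHeight p n c) (pContraction p n c) ⟨k, h2⟩) ∧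
    (IsPMonotone p n c ↔ IsPConvex p n (adjointDiag n c)) := by
  have hP : 0 < p ^ pHeight p n c := pow_pos hp.pos _
  have hheight := pHeight_adjointDiag hp.pos hferr
  have hblock : IsBlockDiagram (p ^ pHeight p n c) c := (heightOK_iff hP).1 (heightOK_pHeight p c)
  have hcomm := hblock.blockContraction_adjointDiag hP
  refine ⟨hheight, fun k h1 h2 => ?_, ?_⟩
  · change blockContraction n (p ^ pHeight p n (adjointDiag n c)) (adjointDiag n c) ⟨k, h1⟩ = _
    revert h1
    rw [hheight, hcomm]
    exact fun _ => rfl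
  · change DiagMonotone _ (blockContraction n _ c) ↔
      DiagConvex _ (blockContraction n (p ^ pHeight p n (adjointDiag n c)) (adjointDiag n c))
    rw [hheight, hcomm]
    exact diagMonotone_iff_diagConvex_adjointDiag
      (monotone_blockContraction hP hblock.dvd_order hferr.1)

/-- for a prime `p` and a Ferrers diagram `D` of order `n`:
(1) `D` and `D^⊤` have the same `p`-height; (2) `(D^⊤)^(p) = (D^(p))^⊤`;
(3) `D` is `p`-monotone iff `D^⊤` is `p`-convex`. -/
theorem statement9 {p n : ℕ} (hp : p.Prime) (hn : 1 ≤ n)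
    (c : Fin n → ℕ) (hferr : IsFerrersDiagram n c) :
    pHeight p n (adjointDiag n c) = pHeight p n c ∧
    (∀ (k : ℕ) (h1 : k < n / p ^ pHeight p n (adjointDiag n c))
        (h2 : k < n / p ^ pHeight p n c),
      pContraction p n (adjointDiag n c) ⟨k, h1⟩ =
        adjointDiag (n / p ^ pHeight p n c) (pContraction p n c) ⟨k, h2⟩) ∧
    (IsPMonotone p n c ↔ IsPConvex p n (adjointDiag n c)) :=
  statement9_general hp c hferr
end

section
/- Let D be a Ferrers diagram of order n that is strictly monotone or initially convex, and let 2 ≤ d ≤ n. Then the pair (D,d) is MDS-constructible, i.e., ν_min(D,d) = Σ_{i=1}^n max{0, |D ∩ Δ_i^n| − d + 1}. -/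
section Statement15Aux

open Finset

private lemma colExt_eq {n : ℕ} (c : Fin n → ℕ) {k : ℕ} (h : k < n) :
    colExt n c k = c ⟨k, h⟩ := dif_pos h

private lemma colExt_zero {n : ℕ} (c : Fin n → ℕ) {k : ℕ} (h : ¬ k < n) :
    colExt n c k = 0 := dif_neg h

private lemma sm_colExt {n : ℕ} {c : Fin n → ℕ} (hsm : DiagStrictlyMonotone n c)
    {k : ℕ} (h : k + 1 < n) (hp : 0 < colExt n c k) :
    colExt n c k < colExt n c (k + 1) := by
  have hk : k < n := by omega
  rw [colExt_eq c hk] at hp ⊢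
  rw [colExt_eq c h]
  exact hsm ⟨k, hk⟩ h hp

private lemma ic_colExt_step {n : ℕ} {c : Fin n → ℕ} (hic : DiagConvex n c)
    {k : ℕ} (h : k + 1 < n) :
    colExt n c (k + 1) ≤ colExt n c k + 1 := by
  have hk : k < n := by omega
  rw [colExt_eq c hk, colExt_eq c h]
  exact hic ⟨k, hk⟩ h

private lemma colExt_le_succ {n : ℕ} {c : Fin n → ℕ} (hferr : IsFerrersDiagram n c)
    (hmc : DiagStrictlyMonotone n c ∨ DiagInitiallyConvex n c) (k : ℕ) :
    colExt n c k ≤ k + 1 := by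
  by_cases hk : k < n
  · rcases hmc with hsm | hic
    · by_contra hc
      push_neg at hc
      have key : ∀ m, k + m < n → k + 2 + m ≤ colExt n c (k + m) := by
        intro m
        induction m with
        | zero => intro h; simpa using by omega
        | succ m ih =>
          intro h
          have h1 : k + m < n := by omega
          have h2 : k + 2 + m ≤ colExt n c (k + m) := ih h1
          have h3 := sm_colExt hsm (show k + m + 1 < n by omega) (by omega)
          have : k + (m + 1) = k + m + 1 := by omega
          rw [this]
          omega
      have hlast : k + (n - 1 - k) < n := by omega
      have h4 := key (n - 1 - k) hlast
      rw [colExt_eq c hlast] at h4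
      have hle := hferr.2 ⟨k + (n - 1 - k), hlast⟩
      omega
    · induction k with
      | zero =>
        rw [colExt_eq c hk]
        exact le_trans (hic.1 hk) (by omega)
      | succ m ih =>
        have hm : m < n := by omega
        have := ic_colExt_step hic.2 hk
        have := ih hm
        omega
  · rw [colExt_zero c hk]; omega

private lemma upclosed_eq_Ico (S : Finset ℕ) (N : ℕ) (hsub : ∀ r ∈ S, r < N)
    (hup : ∀ r ∈ S, r + 1 < N → r + 1 ∈ S) : S = Finset.Ico (N - S.card) N := by
  have climb : ∀ x ∈ S, ∀ m, x ≤ m → m < N → m ∈ S := by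
    intro x hx m
    induction m with
    | zero =>
      intro h1 _
      obtain rfl : x = 0 := Nat.le_zero.mp h1
      exact hx
    | succ m ih =>
      intro h1 h2
      rcases Nat.lt_or_ge x (m + 1) with h | h
      · exact hup m (ih (by omega) (by omega)) h2
      · obtain rfl : x = m + 1 := le_antisymm h1 h
        exact hx
  ext m
  simp only [Finset.mem_Ico]
  constructor
  · intro hm
    have h1 : m < N := hsub m hm
    have h2 : Finset.Ico m N ⊆ S := by
      intro l hl
      rw [Finset.mem_Ico] at hl
      exact climb m hm l hl.1 hl.2
    have h3 := Finset.card_le_card h2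
    rw [Nat.card_Ico] at h3
    omega
  · rintro ⟨h1, h2⟩
    by_contra hm
    have hS : S ⊆ Finset.Ico (m + 1) N := by
      intro x hx
      rw [Finset.mem_Ico]
      refine ⟨?_, hsub x hx⟩
      by_contra hxm
      exact hm (climb x hx m (by omega) h2)
    have h3 := Finset.card_le_card hS
    rw [Nat.card_Ico] at h3
    omega

private lemma downclosed_eq_range (S : Finset ℕ) (hdown : ∀ r, r + 1 ∈ S → r ∈ S) :
    S = Finset.range S.card := by
  have desc : ∀ m ∈ S, ∀ l, l ≤ m → l ∈ S := by
    intro m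
    induction m with
    | zero =>
      intro hm l hl
      obtain rfl : l = 0 := Nat.le_zero.mp hl
      exact hm
    | succ m ih =>
      intro hm l hl
      rcases Nat.lt_or_ge l (m + 1) with h | h
      · exact ih (hdown m hm) l (by omega)
      · obtain rfl : l = m + 1 := le_antisymm hl h
        exact hm
  ext m
  simp only [Finset.mem_range]
  constructor
  · intro hm
    have h1 : Finset.range (m + 1) ⊆ S := by
      intro l hl
      rw [Finset.mem_range] at hl
      exact desc m hm l (by omega)
    have := Finset.card_le_card h1
    rw [Finset.card_range] at this
    omega
  · intro hm
    by_contra hmS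
    have hS : S ⊆ Finset.range m := by
      intro x hx
      rw [Finset.mem_range]
      by_contra hxm
      exact hmS (desc x hx m (by omega))
    have := Finset.card_le_card hS
    rw [Finset.card_range] at this
    omega

private lemma nuJ_count (n d j : ℕ) (c : Fin n → ℕ) (hj : j < d)
    (hcb : ∀ k, colExt n c k ≤ k + 1) :
    nuJ n d j c = ∑ i ∈ Finset.range n,
      ((Finset.range n).filter
        (fun r => r + i < n - j ∧ d - 1 - j ≤ r ∧ r < colExt n c (r + i))).card := by
  set b := d - 1 - j with hb
  set g : ℕ → ℕ → ℕ := fun r col =>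
    if col < n - j ∧ b ≤ r ∧ r < colExt n c col then 1 else 0 with hg
  have step1 : ∀ i ∈ Finset.range n,
      ((Finset.range n).filter
        (fun r => r + i < n - j ∧ b ≤ r ∧ r < colExt n c (r + i))).card
        = ∑ r ∈ Finset.range n, g r (r + i) := by
    intro i _
    rw [Finset.card_filter]
  rw [Finset.sum_congr rfl step1, Finset.sum_comm]
  have gzero_lt : ∀ r col, col < r → g r col = 0 := by
    intro r col h
    have := hcb col
    apply if_neg
    rintro ⟨_, _, h3⟩
    omega
  have gzero_ge : ∀ r col, n ≤ col → g r col = 0 := by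
    intro r col h
    apply if_neg
    rintro ⟨h1, _, _⟩
    omega
  have inner : ∀ r ∈ Finset.range n,
      ∑ i ∈ Finset.range n, g r (r + i) = ∑ col ∈ Finset.range n, g r col := by
    intro r _
    have e1 : ∑ col ∈ Finset.Ico r (n + r), g r col = ∑ i ∈ Finset.range n, g r (r + i) := by
      rw [Finset.sum_Ico_eq_sum_range]
      have hnr : n + r - r = n := by omega
      rw [hnr]
    rw [← e1]
    have e2 : ∑ col ∈ Finset.Ico 0 r, g r col + ∑ col ∈ Finset.Ico r (n + r), g r col
        = ∑ col ∈ Finset.Ico 0 (n + r), g r col :=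
      Finset.sum_Ico_consecutive _ (by omega) (by omega)
    have e3 : ∑ col ∈ Finset.Ico 0 r, g r col = 0 :=
      Finset.sum_eq_zero fun col hcol => gzero_lt r col (Finset.mem_Ico.1 hcol).2
    have e4 : ∑ col ∈ Finset.Ico 0 n, g r col + ∑ col ∈ Finset.Ico n (n + r), g r col
        = ∑ col ∈ Finset.Ico 0 (n + r), g r col :=
      Finset.sum_Ico_consecutive _ (by omega) (by omega)
    have e5 : ∑ col ∈ Finset.Ico n (n + r), g r col = 0 :=
      Finset.sum_eq_zero fun col hcol => gzero_ge r col (Finset.mem_Ico.1 hcol).1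
    have e6 : ∑ col ∈ Finset.range n, g r col = ∑ col ∈ Finset.Ico 0 n, g r col := by
      rw [Finset.range_eq_Ico]
    omega
  rw [Finset.sum_congr rfl inner, Finset.sum_comm]
  have colval : ∀ col ∈ Finset.range n, ∑ r ∈ Finset.range n, g r col
      = if col < n - j then colExt n c col + 1 + j - d else 0 := by
    intro col hcol
    rw [Finset.mem_range] at hcol
    by_cases hc : col < n - j
    · rw [if_pos hc]
      have e7 : ∑ r ∈ Finset.range n, g r col
          = ((Finset.range n).filter (fun r => b ≤ r ∧ r < colExt n c col)).card := by
        rw [Finset.card_filter]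
        apply Finset.sum_congr rfl
        intro r _
        simp only [hg, hc, true_and]
      have e8 : ((Finset.range n).filter (fun r => b ≤ r ∧ r < colExt n c col))
          = Finset.Ico b (colExt n c col) := by
        ext r
        simp only [Finset.mem_filter, Finset.mem_range, Finset.mem_Ico]
        have := hcb col
        omega
      rw [e7, e8, Nat.card_Ico]
      omega
    · rw [if_neg hc]
      apply Finset.sum_eq_zero
      intro r _
      apply if_neg
      rintro ⟨h1, _, _⟩
      exact hc h1
  rw [Finset.sum_congr rfl colval]
  rw [nuJ]
  rw [← Finset.sum_subset (Finset.range_subset_range.2 (Nat.sub_le n j))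
      (fun x _ hnx => if_neg (by rw [Finset.mem_range] at hnx; omega))]
  apply Finset.sum_congr rfl
  intro x hx
  rw [if_pos (Finset.mem_range.1 hx)]

private lemma kept_card_ge (n d j i : ℕ) (c : Fin n → ℕ) (hj : j < d) :
    diagDots n c i - (d - 1) ≤
      ((Finset.range n).filter
        (fun r => r + i < n - j ∧ d - 1 - j ≤ r ∧ r < colExt n c (r + i))).card := by
  classical
  set A := (Finset.range n).filter (fun r => r + i < n ∧ r < colExt n c (r + i)) with hA
  set K := (Finset.range n).filter
    (fun r => r + i < n - j ∧ d - 1 - j ≤ r ∧ r < colExt n c (r + i)) with hK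
  have hKA : K ⊆ A := by
    intro r hr
    simp only [hK, hA, Finset.mem_filter] at hr ⊢
    exact ⟨hr.1, by omega, hr.2.2.2⟩
  have hsd : A \ K ⊆ Finset.Ico (n - j - i) (n - i) ∪ Finset.range (d - 1 - j) := by
    intro r hr
    simp only [Finset.mem_sdiff, hA, hK, Finset.mem_filter, Finset.mem_union,
      Finset.mem_Ico, Finset.mem_range] at hr ⊢
    omega
  have hcard1 : (Finset.Ico (n - j - i) (n - i) ∪ Finset.range (d - 1 - j)).card ≤ d - 1 := by
    have h1 := Finset.card_union_le (Finset.Ico (n - j - i) (n - i)) (Finset.range (d - 1 - j))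
    rw [Nat.card_Ico, Finset.card_range] at h1
    omega
  have h2 := Finset.card_le_card hsd
  have h3 := Finset.card_sdiff_of_subset hKA
  have h4 := Finset.card_le_card hKA
  have h5 : diagDots n c i = A.card := rfl
  omega

private lemma nuJ_sm (n d : ℕ) (c : Fin n → ℕ) (hd2 : 2 ≤ d) (hdn : d ≤ n)
    (hsm : DiagStrictlyMonotone n c) (hcb : ∀ k, colExt n c k ≤ k + 1) :
    nuJ n d (d - 1) c = ∑ i ∈ Finset.range n, (diagDots n c i - (d - 1)) := by
  rw [nuJ_count n d (d - 1) c (by omega) hcb]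
  apply Finset.sum_congr rfl
  intro i hi
  rw [Finset.mem_range] at hi
  set A := (Finset.range n).filter (fun r => r + i < n ∧ r < colExt n c (r + i)) with hA
  set t := diagDots n c i with ht0
  have htA : t = A.card := rfl
  have hAI : A = Finset.Ico (n - i - t) (n - i) := by
    rw [htA]
    apply upclosed_eq_Ico
    · intro r hr
      simp only [hA, Finset.mem_filter] at hr
      omega
    · intro r hr hrN
      simp only [hA, Finset.mem_filter, Finset.mem_range] at hr ⊢
      obtain ⟨h1, h2, h3⟩ := hr
      have h4 := sm_colExt hsm (show r + i + 1 < n by omega) (by omega)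
      have h5 : r + 1 + i = r + i + 1 := by omega
      rw [h5]
      exact ⟨by omega, by omega, by omega⟩
  have hkept : ((Finset.range n).filter
      (fun r => r + i < n - (d - 1) ∧ d - 1 - (d - 1) ≤ r ∧ r < colExt n c (r + i)))
      = A.filter (fun r => r + i < n - (d - 1)) := by
    ext r
    simp only [hA, Finset.mem_filter, Finset.mem_range]
    constructor
    · rintro ⟨h1, h2, _, h4⟩
      exact ⟨⟨h1, by omega, h4⟩, h2⟩
    · rintro ⟨⟨h1, _, h3⟩, h4⟩
      exact ⟨h1, h4, by omega, h3⟩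
  rw [hkept, hAI]
  have htle : t ≤ n - i := by
    have := congrArg Finset.card hAI
    rw [← htA, Nat.card_Ico] at this
    omega
  have hfil : (Finset.Ico (n - i - t) (n - i)).filter (fun r => r + i < n - (d - 1))
      = Finset.Ico (n - i - t) (n - (d - 1) - i) := by
    ext r
    simp only [Finset.mem_filter, Finset.mem_Ico]
    omega
  rw [hfil, Nat.card_Ico]
  omega

private lemma nuJ_ic (n d : ℕ) (c : Fin n → ℕ) (hd2 : 2 ≤ d)
    (hic : DiagInitiallyConvex n c) (hcb : ∀ k, colExt n c k ≤ k + 1) :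
    nuJ n d 0 c = ∑ i ∈ Finset.range n, (diagDots n c i - (d - 1)) := by
  rw [nuJ_count n d 0 c (by omega) hcb]
  apply Finset.sum_congr rfl
  intro i hi
  rw [Finset.mem_range] at hi
  set A := (Finset.range n).filter (fun r => r + i < n ∧ r < colExt n c (r + i)) with hA
  set t := diagDots n c i with ht0
  have htA : t = A.card := rfl
  have hAR : A = Finset.range t := by
    rw [htA]
    apply downclosed_eq_range
    intro r hr
    simp only [hA, Finset.mem_filter, Finset.mem_range] at hr ⊢
    obtain ⟨h1, h2, h3⟩ := hr
    have h4 : r + 1 + i = r + i + 1 := by omega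
    rw [h4] at h2 h3
    have h5 := ic_colExt_step hic.2 (show r + i + 1 < n by omega)
    exact ⟨by omega, by omega, by omega⟩
  have hkept : ((Finset.range n).filter
      (fun r => r + i < n - 0 ∧ d - 1 - 0 ≤ r ∧ r < colExt n c (r + i)))
      = A.filter (fun r => d - 1 ≤ r) := by
    ext r
    simp only [hA, Finset.mem_filter, Finset.mem_range]
    constructor
    · rintro ⟨h1, h2, h3, h4⟩
      exact ⟨⟨h1, by omega, h4⟩, by omega⟩
    · rintro ⟨⟨h1, h2, h3⟩, h4⟩
      exact ⟨h1, by omega, by omega, h3⟩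
  rw [hkept, hAR]
  have hfil : (Finset.range t).filter (fun r => d - 1 ≤ r) = Finset.Ico (d - 1) t := by
    ext r
    simp only [Finset.mem_filter, Finset.mem_range, Finset.mem_Ico]
    omega
  rw [hfil, Nat.card_Ico]

end Statement15Aux

/-- if `D` is a strictly monotone or initially convex Ferrers diagram
of order `n` and `2 ≤ d ≤ n`, then the pair `(D, d)` is MDS-constructible. -/
theorem statement15 {n d : ℕ} (hn : 1 ≤ n) (hd2 : 2 ≤ d) (hdn : d ≤ n)
    (c : Fin n → ℕ) (hferr : IsFerrersDiagram n c)
    (hmc : DiagStrictlyMonotone n c ∨ DiagInitiallyConvex n c) :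
    IsMDSConstructibleP n d c := by
  have hcb : ∀ k, colExt n c k ≤ k + 1 := colExt_le_succ hferr hmc
  have hRHS : ∑ i ∈ Finset.range n, (diagDots n c i + 1 - d)
      = ∑ i ∈ Finset.range n, (diagDots n c i - (d - 1)) :=
    Finset.sum_congr rfl (fun i _ => by omega)
  unfold IsMDSConstructibleP nuMin
  rw [hRHS]
  apply le_antisymm
  · rcases hmc with hsm | hic
    · calc sInf {k | ∃ j < d, k = nuJ n d j c} ≤ nuJ n d (d - 1) c :=
            Nat.sInf_le ⟨d - 1, by omega, rfl⟩
          _ = _ := nuJ_sm n d c hd2 hdn hsm hcb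
    · calc sInf {k | ∃ j < d, k = nuJ n d j c} ≤ nuJ n d 0 c :=
            Nat.sInf_le ⟨0, by omega, rfl⟩
          _ = _ := nuJ_ic n d c hd2 hic hcb
  · refine le_csInf ⟨nuJ n d 0 c, ⟨0, by omega, rfl⟩⟩ ?_
    rintro k ⟨j, hjd, rfl⟩
    rw [nuJ_count n d j c hjd hcb]
    exact Finset.sum_le_sum (fun i _ => kept_card_ge n d j i c hjd)
end

section
/- Let D be a Ferrers diagram of order n, let 2 ≤ d ≤ n, and let j ∈ {0,…,d−1} be such that (D,d) is j-Singleton. Let D' ⊆ D be a Ferrers diagram of order n such that D ∩ L_{n,d,j} = D' ∩ L_{n,d,j}. Then (D',d) is j-Singleton. -/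
/-
The dots of `D` missing from `D'` all lie in `S_{n,d,j}`, because `D` and `D'` agree on its
complement `L_{n,d,j}`. Hence `ν_j` drops by exactly the number `E` of missing dots, while
every other `ν_{j'}` drops by at most `E`; so `ν_j` stays minimal.
-/

open Finset

section RemovedDots

variable {n : ℕ} {c c' : Fin n → ℕ}

lemma colExt_le_of_forall_le {m : ℕ} (h : ∀ i, c i ≤ m) (k : ℕ) : colExt n c k ≤ m := by
  unfold colExt
  split
  · exact h _
  · exact Nat.zero_le m

lemma colExt_le_colExt (hsub : ∀ i, c' i ≤ c i) (k : ℕ) : colExt n c' k ≤ colExt n c k := by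
  unfold colExt
  split
  · exact hsub _
  · exact le_rfl

/-- `|D \ D'|`, for diagrams `D' ⊆ D` with column heights `c'` and `c`. -/
def removedDots (n : ℕ) (c c' : Fin n → ℕ) : ℕ :=
  ∑ i ∈ range n, (colExt n c i - colExt n c' i)

lemma nuJ_le_nuJ_add_removedDots (d j : ℕ) (hsub : ∀ i, c' i ≤ c i) :
    nuJ n d j c ≤ nuJ n d j c' + removedDots n c c' := by
  unfold nuJ removedDots
  calc ∑ i ∈ range (n - j), (colExt n c i + 1 + j - d)
      ≤ ∑ i ∈ range (n - j), ((colExt n c' i + 1 + j - d) + (colExt n c i - colExt n c' i)) :=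
        sum_le_sum fun i _ => by have := colExt_le_colExt hsub i; omega
    _ = ∑ i ∈ range (n - j), (colExt n c' i + 1 + j - d) +
          ∑ i ∈ range (n - j), (colExt n c i - colExt n c' i) := sum_add_distrib
    _ ≤ ∑ i ∈ range (n - j), (colExt n c' i + 1 + j - d) +
          ∑ i ∈ range n, (colExt n c i - colExt n c' i) := by
        gcongr
        exact Nat.sub_le n j

/-- `hS` says that every removed dot `(r, k)` (0-indexed, `c' k ≤ r < c k`) lies in `S_{n,d,j}`. -/
lemma nuJ_eq_nuJ_add_removedDots {d j : ℕ} (hsub : ∀ i, c' i ≤ c i)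
    (hS : ∀ k, colExt n c' k < colExt n c k → k < n - j ∧ d ≤ colExt n c' k + 1 + j) :
    nuJ n d j c = nuJ n d j c' + removedDots n c c' := by
  have hE : removedDots n c c' = ∑ i ∈ range (n - j), (colExt n c i - colExt n c' i) := by
    refine (sum_subset (range_subset_range.2 (Nat.sub_le n j)) fun k _ hk => ?_).symm
    have := hS k
    simp only [mem_range] at hk
    omega
  rw [hE, nuJ, nuJ, ← sum_add_distrib]
  refine sum_congr rfl fun k _ => ?_
  have := hS k
  have := colExt_le_colExt hsub k
  omega

end RemovedDots

lemma nuMin_eq_nuJ_iff {n d j : ℕ} (c : Fin n → ℕ) (hj : j < d) :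
    nuMin n d c = nuJ n d j c ↔ ∀ j' < d, nuJ n d j c ≤ nuJ n d j' c := by
  constructor
  · intro h j' hj'
    exact h ▸ Nat.sInf_le ⟨j', hj', rfl⟩
  · intro h
    refine le_antisymm (Nat.sInf_le ⟨j, hj, rfl⟩) (le_csInf ⟨_, j, hj, rfl⟩ ?_)
    rintro k ⟨j', hj', rfl⟩
    exact h j' hj'

lemma removed_mem_S_of_eq_on_L {n d j : ℕ} {c c' : Fin n → ℕ} (hc : ∀ i, c i ≤ n)
    (hL : ∀ r col : Fin n, ((r : ℕ) + 1 < d - j ∨ n - j < (col : ℕ) + 1) →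
      ((r : ℕ) < c col ↔ (r : ℕ) < c' col))
    (k : ℕ) (hk : colExt n c' k < colExt n c k) :
    k < n - j ∧ d ≤ colExt n c' k + 1 + j := by
  have hkn : k < n := by
    by_contra h
    simp [colExt, h] at hk
  have hr : colExt n c' k < n := hk.trans_le (colExt_le_of_forall_le hc k)
  have hrow := hL ⟨colExt n c' k, hr⟩ ⟨k, hkn⟩
  simp only [colExt, dif_pos hkn] at hk hrow ⊢
  omega

theorem statement17_general {n d j : ℕ} (hj : j < d)
    (c c' : Fin n → ℕ) (hc : IsFerrersDiagram n c)
    (hsub : ∀ i, c' i ≤ c i)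
    (hL : ∀ r col : Fin n, ((r : ℕ) + 1 < d - j ∨ n - j < (col : ℕ) + 1) →
      ((r : ℕ) < c col ↔ (r : ℕ) < c' col))
    (hsing : nuMin n d c = nuJ n d j c) :
    nuMin n d c' = nuJ n d j c' := by
  rw [nuMin_eq_nuJ_iff c hj] at hsing
  rw [nuMin_eq_nuJ_iff c' hj]
  intro j' hj'
  have hdrop := nuJ_eq_nuJ_add_removedDots hsub (removed_mem_S_of_eq_on_L hc.2 hL)
  have hdrop' := nuJ_le_nuJ_add_removedDots d j' hsub
  have := hsing j' hj'
  omega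

/-- if `(D, d)` is `j`-Singleton and `D' ⊆ D` is a Ferrers diagram of
order `n` with `D ∩ L_{n,d,j} = D' ∩ L_{n,d,j}`, then `(D', d)` is `j`-Singleton.
Here a point `(r, col)` (0-indexed) lies in `D` iff `r < c col`, and it lies in
`L_{n,d,j}` iff `r + 1 < d - j` or `n - j < col + 1` (1-indexed translation). -/
theorem statement17 {n d j : ℕ} (hn : 1 ≤ n) (hd2 : 2 ≤ d) (hdn : d ≤ n) (hj : j < d)
    (c c' : Fin n → ℕ) (hc : IsFerrersDiagram n c) (hc' : IsFerrersDiagram n c')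
    (hsub : ∀ i, c' i ≤ c i)
    (hL : ∀ r col : Fin n, ((r : ℕ) + 1 < d - j ∨ n - j < (col : ℕ) + 1) →
      ((r : ℕ) < c col ↔ (r : ℕ) < c' col))
    (hsing : nuMin n d c = nuJ n d j c) :
    nuMin n d c' = nuJ n d j c' :=
  statement17_general hj c c' hc hsub hL hsing
end

section
/- Let D be a Ferrers diagram of order n, let 2 ≤ d ≤ n and j ∈ {0,…,d−1}, and assume (D,d) is MDS-constructible and j-Singleton. Then: (1) D ∩ S_{n,d,j} = D ∩ T_{n,d,j}; (2) {i ∈ [n−d+1] : |D ∩ Δ_i^n| ≥ d} = {i ∈ [n−d+1] : D ∩ Δ_i^n ∩ S_{n,d,j} ≠ ∅}; (3) if i ∈ [n−d+1] and D ∩ Δ_i^n ∩ S_{n,d,j} ≠ ∅, then Δ_i^n ∩ L_{n,d,j} ⊆ D ∩ Δ_i^n. -/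
/-! Count the cells of `D ∩ S_{n,d,j}` twice. Column by column there are `ν_j(D,d)` of them.
A diagonal `Δ_i^n` meets `L_{n,d,j}` in at most `d - 1` cells (its first `d - 1 - j` and its last
`j`), so `|D ∩ Δ_i^n ∩ S_{n,d,j}| ≥ |D ∩ Δ_i^n| - d + 1`; since the diagonals only see the cells on
or above the main diagonal,
`∑ᵢ max{0, |D ∩ Δ_i^n| - d + 1} ≤ |D ∩ S_{n,d,j} ∩ T_n| ≤ |D ∩ S_{n,d,j}| = ν_j(D,d) = ν_min(D,d)`.
MDS-constructibility makes the two ends equal, so every inequality is tight: `D ∩ S_{n,d,j}` lies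
in `T_n`, and on a diagonal meeting `D ∩ S_{n,d,j}` the set `D ∩ Δ_i^n ∩ L_{n,d,j}` has `d - 1`
cells, hence is all of `Δ_i^n ∩ L_{n,d,j}`. -/

open Finset

section Diagonals

variable (n d j : ℕ) (c : Fin n → ℕ)

/- Cells are pairs `(row, col)` indexed from `0`, so `(r, r + k)` lies on `Δ_{k+1}^n`.
`diagRows`, `diagRowsInS` and `diagRowsInL` hold the rows of the cells of `D ∩ Δ_{k+1}^n`,
`D ∩ Δ_{k+1}^n ∩ S_{n,d,j}` and `Δ_{k+1}^n ∩ L_{n,d,j}`; `cellsInS` is `D ∩ S_{n,d,j}`. -/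

def diagRows (k : ℕ) : Finset ℕ :=
  (range n).filter fun r => r + k < n ∧ r < colExt n c (r + k)

abbrev DiagCellInS (k r : ℕ) : Prop :=
  d - j ≤ r + 1 ∧ r + k + 1 ≤ n - j

def diagRowsInS (k : ℕ) : Finset ℕ :=
  (diagRows n c k).filter (DiagCellInS n d j k)

def diagRowsInL (k : ℕ) : Finset ℕ :=
  (range n).filter fun r => r + k < n ∧ ¬DiagCellInS n d j k r

def cellsInS : Finset (ℕ × ℕ) :=
  (range n ×ˢ range n).filter fun p => p.1 < colExt n c p.2 ∧ d - j ≤ p.1 + 1 ∧ p.2 + 1 ≤ n - j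

variable {n d j}

lemma colExt_val (col : Fin n) : colExt n c col = c col := by
  simp [colExt]

lemma colExt_le (hc : ∀ i, c i ≤ n) (k : ℕ) : colExt n c k ≤ n := by
  unfold colExt
  split_ifs
  exacts [hc _, Nat.zero_le n]

lemma card_diagRowsInL_le (hj : j < d) (k : ℕ) : #(diagRowsInL n d j k) ≤ d - 1 := by
  have hsub : diagRowsInL n d j k ⊆ range (d - 1 - j) ∪ Ico (n - j - k) (n - k) := by
    intro r hr
    simp only [diagRowsInL, mem_filter, mem_range] at hr
    simp only [mem_union, mem_range, mem_Ico]
    omega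
  calc #(diagRowsInL n d j k)
      ≤ #(range (d - 1 - j) ∪ Ico (n - j - k) (n - k)) := card_le_card hsub
    _ ≤ #(range (d - 1 - j)) + #(Ico (n - j - k) (n - k)) := card_union_le _ _
    _ ≤ d - 1 := by simp only [card_range, Nat.card_Ico]; omega

lemma filter_not_diagCellInS_subset (k : ℕ) :
    (diagRows n c k).filter (fun r => ¬DiagCellInS n d j k r) ⊆ diagRowsInL n d j k := by
  intro r hr
  simp only [diagRows, diagRowsInL, mem_filter] at hr ⊢
  exact ⟨hr.1.1, hr.1.2.1, hr.2⟩

lemma diagDots_eq_card_add_card (k : ℕ) :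
    diagDots n c k = #(diagRowsInS n d j c k) +
      #((diagRows n c k).filter fun r => ¬DiagCellInS n d j k r) :=
  (card_filter_add_card_filter_not _).symm

lemma diagDots_add_one_sub_le (hj : j < d) (k : ℕ) :
    diagDots n c k + 1 - d ≤ #(diagRowsInS n d j c k) := by
  have := card_le_card (filter_not_diagCellInS_subset (d := d) (j := j) c k)
  have := card_diagRowsInL_le (n := n) hj k
  have := diagDots_eq_card_add_card (d := d) (j := j) c k
  omega

lemma diagRowsInL_subset_of_eq (hj : j < d) (k : ℕ)
    (heq : diagDots n c k + 1 - d = #(diagRowsInS n d j c k))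
    (hpos : 0 < #(diagRowsInS n d j c k)) :
    diagRowsInL n d j k ⊆ diagRows n c k := by
  have hsub := filter_not_diagCellInS_subset (d := d) (j := j) c k
  have hL := card_diagRowsInL_le (n := n) hj k
  have hsplit := diagDots_eq_card_add_card (d := d) (j := j) c k
  have hfull := eq_of_subset_of_card_le hsub (by omega)
  exact hfull ▸ filter_subset _ _

end Diagonals

section Cells

variable {n d j : ℕ} (c : Fin n → ℕ)

lemma card_cellsInS (hj : j < d) (hc : ∀ i, c i ≤ n) : #(cellsInS n d j c) = nuJ n d j c := by
  have hmaps : ∀ p ∈ cellsInS n d j c, p.2 ∈ range (n - j) := by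
    intro p hp
    simp only [cellsInS, mem_filter, mem_range] at hp ⊢
    omega
  rw [card_eq_sum_card_fiberwise hmaps, nuJ]
  refine sum_congr rfl fun col hcol => ?_
  have hcol := mem_range.1 hcol
  have hfiber : (cellsInS n d j c).filter (fun p => p.2 = col) =
      Ico (d - j - 1) (colExt n c col) ×ˢ {col} := by
    have := colExt_le c hc col
    ext ⟨r, b⟩
    simp only [cellsInS, mem_filter, mem_product, mem_range, mem_Ico, mem_singleton]
    constructor
    · rintro ⟨⟨-, hlt, hS, -⟩, rfl⟩
      omega
    · rintro ⟨⟨hS, hlt⟩, rfl⟩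
      omega
  rw [hfiber, card_product, Nat.card_Ico, card_singleton]
  omega

lemma card_filter_cellsInS_le_eq_sum :
    #((cellsInS n d j c).filter fun p => p.1 ≤ p.2) = ∑ k ∈ range n, #(diagRowsInS n d j c k) := by
  have hmaps : ∀ p ∈ (cellsInS n d j c).filter (fun p => p.1 ≤ p.2), p.2 - p.1 ∈ range n := by
    intro p hp
    simp only [cellsInS, mem_filter, mem_range] at hp ⊢
    omega
  rw [card_eq_sum_card_fiberwise hmaps]
  refine sum_congr rfl fun k _ => ?_
  have hfiber : ((cellsInS n d j c).filter fun p => p.1 ≤ p.2).filter (fun p => p.2 - p.1 = k) =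
      (diagRowsInS n d j c k).map ⟨fun r => (r, r + k), fun _ _ h => congrArg Prod.fst h⟩ := by
    ext ⟨r, b⟩
    simp only [cellsInS, diagRowsInS, diagRows, mem_filter, mem_map, mem_product, mem_range]
    constructor
    · rintro ⟨⟨⟨⟨hr, hb⟩, hlt, hS⟩, hle⟩, hk⟩
      obtain rfl : b = r + k := by omega
      exact ⟨r, ⟨⟨hr, hb, hlt⟩, hS.1, by omega⟩, rfl⟩
    · rintro ⟨r, ⟨⟨hr, hrk, hlt⟩, hS⟩, rfl, rfl⟩
      exact ⟨⟨⟨⟨hr, hrk⟩, hlt, hS.1, by omega⟩, by omega⟩, by omega⟩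
  rw [hfiber, card_map]

lemma mk_mem_cellsInS (r col : Fin n) :
    ((r : ℕ), (col : ℕ)) ∈ cellsInS n d j c ↔
      (r : ℕ) < c col ∧ d - j ≤ (r : ℕ) + 1 ∧ (col : ℕ) + 1 ≤ n - j := by
  simp [cellsInS, colExt_val]

lemma mem_diagRows_iff {i : ℕ} {r col : Fin n} (hcol : (col : ℕ) = r + i) :
    (r : ℕ) ∈ diagRows n c i ↔ (r : ℕ) < c col := by
  simp only [diagRows, mem_filter, mem_range, ← hcol, colExt_val]
  exact ⟨fun h => h.2.2, fun h => ⟨r.2, col.2, h⟩⟩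

lemma diagRowsInS_nonempty_iff (i : ℕ) :
    (diagRowsInS n d j c i).Nonempty ↔
      ∃ r col : Fin n, (col : ℕ) = (r : ℕ) + i ∧ (r : ℕ) < c col ∧
        d - j ≤ (r : ℕ) + 1 ∧ (col : ℕ) + 1 ≤ n - j := by
  constructor
  · rintro ⟨r, hr⟩
    obtain ⟨hrow, hS⟩ := mem_filter.1 hr
    have hrn : r + i < n := (mem_filter.1 hrow).2.1
    refine ⟨⟨r, by omega⟩, ⟨r + i, hrn⟩, rfl, (mem_diagRows_iff c rfl).1 hrow, hS.1, hS.2⟩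
  · rintro ⟨r, col, hcol, hlt, hS⟩
    exact ⟨r, mem_filter.2 ⟨(mem_diagRows_iff c hcol).2 hlt, hS.1, by omega⟩⟩

end Cells

theorem cellsInS_upper_and_diagDots_eq {n d j : ℕ} (c : Fin n → ℕ) (hj : j < d)
    (hc : ∀ i, c i ≤ n) (hmds : IsMDSConstructibleP n d c) (hsing : nuMin n d c = nuJ n d j c) :
    (∀ p ∈ cellsInS n d j c, p.1 ≤ p.2) ∧
      ∀ k < n, diagDots n c k + 1 - d = #(diagRowsInS n d j c k) := by
  have hends : ∑ k ∈ range n, (diagDots n c k + 1 - d) = #(cellsInS n d j c) := by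
    rw [card_cellsInS c hj hc, ← hsing, hmds]
  have hdiag_le := fun k (_ : k ∈ range n) => diagDots_add_one_sub_le (d := d) c hj k
  have hsum_le := sum_le_sum hdiag_le
  have hupper_le := card_filter_le (cellsInS n d j c) fun p => p.1 ≤ p.2
  rw [card_filter_cellsInS_le_eq_sum] at hupper_le
  refine ⟨card_filter_eq_iff.1 ?_,
    fun k hk => (sum_eq_sum_iff_of_le hdiag_le).1 ?_ k (mem_range.2 hk)⟩
  · rw [card_filter_cellsInS_le_eq_sum]
    omega
  · omega

theorem statement18_general {n d j : ℕ} (hdn : d ≤ n) (hj : j < d)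
    (c : Fin n → ℕ) (hferr : IsFerrersDiagram n c)
    (hmds : IsMDSConstructibleP n d c)
    (hsing : nuMin n d c = nuJ n d j c) :
    (∀ r col : Fin n,
      (((r : ℕ) < c col ∧ d - j ≤ (r : ℕ) + 1 ∧ (col : ℕ) + 1 ≤ n - j) ↔
        ((r : ℕ) < c col ∧ (d - j ≤ (r : ℕ) + 1 ∧ (col : ℕ) + 1 ≤ n - j) ∧
          (r : ℕ) ≤ (col : ℕ)))) ∧
    (∀ i : ℕ, i < n - d + 1 →
      (d ≤ diagDots n c i ↔
        ∃ r col : Fin n, (col : ℕ) = (r : ℕ) + i ∧ (r : ℕ) < c col ∧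
          d - j ≤ (r : ℕ) + 1 ∧ (col : ℕ) + 1 ≤ n - j)) ∧
    (∀ i : ℕ, i < n - d + 1 →
      (∃ r col : Fin n, (col : ℕ) = (r : ℕ) + i ∧ (r : ℕ) < c col ∧
          d - j ≤ (r : ℕ) + 1 ∧ (col : ℕ) + 1 ≤ n - j) →
      ∀ r col : Fin n, (col : ℕ) = (r : ℕ) + i →
        ¬(d - j ≤ (r : ℕ) + 1 ∧ (col : ℕ) + 1 ≤ n - j) → (r : ℕ) < c col) := by
  obtain ⟨hupper, hdiag⟩ := cellsInS_upper_and_diagDots_eq c hj hferr.2 hmds hsing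
  refine ⟨fun r col => ?_, fun i hi => ?_, fun i hi hS r col hcol hL => ?_⟩
  · exact ⟨fun h => ⟨h.1, h.2, hupper _ ((mk_mem_cellsInS c r col).2 h)⟩, fun h => ⟨h.1, h.2.1⟩⟩
  · rw [← diagRowsInS_nonempty_iff, ← card_pos]
    have := hdiag i (by omega)
    omega
  · have hpos := card_pos.2 ((diagRowsInS_nonempty_iff c i).2 hS)
    have hrL : (r : ℕ) ∈ diagRowsInL n d j i :=
      mem_filter.2 ⟨mem_range.2 r.2, by omega, fun h => hL ⟨h.1, by omega⟩⟩
    exact (mem_diagRows_iff c hcol).1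
      (diagRowsInL_subset_of_eq c hj i (hdiag i (by omega)) hpos hrL)

/-- if `(D, d)` is MDS-constructible and `j`-Singleton then
(1) `D ∩ S_{n,d,j} = D ∩ T_{n,d,j}`;
(2) `{i ∈ [n-d+1] : |D ∩ Δ_i^n| ≥ d} = {i ∈ [n-d+1] : D ∩ Δ_i^n ∩ S_{n,d,j} ≠ ∅}`;
(3) if `i ∈ [n-d+1]` and `D ∩ Δ_i^n ∩ S_{n,d,j} ≠ ∅`, then `Δ_i^n ∩ L_{n,d,j} ⊆ D ∩ Δ_i^n`.
Here (0-indexed) `(r, col) ∈ D` iff `r < c col`; `(r, col) ∈ S_{n,d,j}` iff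
`d - j ≤ r + 1` and `col + 1 ≤ n - j`; `(r, col) ∈ T_n` iff `r ≤ col`; and `(r, col)`
lies on the diagonal `Δ_{i+1}^n` iff `col = r + i` (0-indexed diagonal index `i`). -/
theorem statement18 {n d j : ℕ} (hn : 1 ≤ n) (hd2 : 2 ≤ d) (hdn : d ≤ n) (hj : j < d)
    (c : Fin n → ℕ) (hferr : IsFerrersDiagram n c)
    (hmds : IsMDSConstructibleP n d c)
    (hsing : nuMin n d c = nuJ n d j c) :
    (∀ r col : Fin n,
      (((r : ℕ) < c col ∧ d - j ≤ (r : ℕ) + 1 ∧ (col : ℕ) + 1 ≤ n - j) ↔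
        ((r : ℕ) < c col ∧ (d - j ≤ (r : ℕ) + 1 ∧ (col : ℕ) + 1 ≤ n - j) ∧
          (r : ℕ) ≤ (col : ℕ)))) ∧
    (∀ i : ℕ, i < n - d + 1 →
      (d ≤ diagDots n c i ↔
        ∃ r col : Fin n, (col : ℕ) = (r : ℕ) + i ∧ (r : ℕ) < c col ∧
          d - j ≤ (r : ℕ) + 1 ∧ (col : ℕ) + 1 ≤ n - j)) ∧
    (∀ i : ℕ, i < n - d + 1 →
      (∃ r col : Fin n, (col : ℕ) = (r : ℕ) + i ∧ (r : ℕ) < c col ∧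
          d - j ≤ (r : ℕ) + 1 ∧ (col : ℕ) + 1 ≤ n - j) →
      ∀ r col : Fin n, (col : ℕ) = (r : ℕ) + i →
        ¬(d - j ≤ (r : ℕ) + 1 ∧ (col : ℕ) + 1 ≤ n - j) → (r : ℕ) < c col) :=
  statement18_general hdn hj c hferr hmds hsing
end
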